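/- Let H be a separable infinite-dimensional complex Hilbert space and let T ∈ B(H) be a compact operator with Ker T = {0} and dense range. Then for every unitary operator U and every compact operator K on H, the operator (U + K)T is not a Cowen–Douglas operator; that is, there is no positive integer n and nonempty connected open set Ω ⊆ ℂ with (U+K)T ∈ B_n(Ω). -/

import Mathlib

open Filter Topology

noncomputable section

variable {H : Type*} [NormedAddCommGroup H] [InnerProductSpace ℂ H] [CompleteSpace H]

/-- An operator `T` is strongly irreducible if there is no bounded idempotent `P`
with `P ≠ 0`, `P ≠ 1` commuting with `T`. -/
def StronglyIrreducible (T : H →L[ℂ] H) : Prop :=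
  ¬ ∃ P : H →L[ℂ] H, P * P = P ∧ P ≠ 0 ∧ P ≠ 1 ∧ P * T = T * P

/-- A sequence `f` is a Schauder basis if every vector has a unique norm-convergent
expansion `x = ∑ αₙ • fₙ`. -/
def IsSchauderBasis (f : ℕ → H) : Prop :=
  ∀ x : H, ∃! α : ℕ → ℂ,
    Tendsto (fun k => ∑ n ∈ Finset.range k, α n • f n) atTop (𝓝 x)

/-- A Schauder basis is unconditional if every convergent expansion converges after
every permutation of its terms. -/
def IsUnconditionalSchauderBasis (f : ℕ → H) : Prop :=
  IsSchauderBasis f ∧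
  ∀ (α : ℕ → ℂ) (x : H),
    Tendsto (fun k => ∑ n ∈ Finset.range k, α n • f n) atTop (𝓝 x) →
    ∀ σ : Equiv.Perm ℕ,
      ∃ y, Tendsto (fun k => ∑ n ∈ Finset.range k, α (σ n) • f (σ n)) atTop (𝓝 y)

/-- Two bases are equivalent if exactly the same scalar sequences give convergent series. -/
def BasesEquivalent (f g : ℕ → H) : Prop :=
  ∀ α : ℕ → ℂ,
    (∃ x, Tendsto (fun k => ∑ n ∈ Finset.range k, α n • f n) atTop (𝓝 x)) ↔
    (∃ x, Tendsto (fun k => ∑ n ∈ Finset.range k, α n • g n) atTop (𝓝 x))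

/-- Membership in the Cowen–Douglas class `B_n(Ω)`. -/
def InCowenDouglasClass (A : H →L[ℂ] H) (n : ℕ) (Ω : Set ℂ) : Prop :=
  IsOpen Ω ∧ IsConnected Ω ∧
  (∀ z ∈ Ω, Function.Surjective ⇑(A - z • (1 : H →L[ℂ] H)) ∧
    Module.finrank ℂ (LinearMap.ker ((A - z • (1 : H →L[ℂ] H) : H →L[ℂ] H) : H →ₗ[ℂ] H)) = n) ∧
  (⨆ z ∈ Ω, LinearMap.ker ((A - z • (1 : H →L[ℂ] H) : H →L[ℂ] H) : H →ₗ[ℂ] H)).topologicalClosure = ⊤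

/-!
The operator `(U + K) * T` is compact, and a nonempty open `Ω` contains some `z ≠ 0`. For a
compact `A` and `z ≠ 0`, `A - z` cannot be surjective with nonzero kernel: otherwise the kernels
of `(A - z) ^ k` increase strictly, Riesz's lemma gives bounded vectors `y k` in the `(k + 1)`-st
kernel at distance at least `1` from the `k`-th one, and then the vectors `A (y k)` are pairwise
`‖z‖`-separated, which is impossible in a compact set.
-/

theorem IsCompact.not_pairwise_le_dist {X : Type*} [MetricSpace X] {K : Set X}
    (hK : IsCompact K) {u : ℕ → X} (hu : ∀ n, u n ∈ K) {ε : ℝ} (hε : 0 < ε) :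
    ¬ Pairwise fun m n => ε ≤ dist (u m) (u n) := fun hsep =>
  noncompact_univ ℕ <| ((Metric.isClosedEmbedding_of_pairwise_le_dist hε hsep).isCompact_preimage
    hK).of_isClosed_subset isClosed_univ fun n _ => hu n

theorem Module.End.strictMono_ker_pow_of_surjective {R M : Type*} [Semiring R]
    [AddCommMonoid M] [Module R M] {f : Module.End R M} (hsurj : Function.Surjective f)
    (hker : LinearMap.ker f ≠ ⊥) : StrictMono fun k => LinearMap.ker (f ^ k) := by
  refine strictMono_nat_of_lt_succ fun k => ?_
  obtain ⟨x₀, hx₀, hx₀ne⟩ := (Submodule.ne_bot_iff _).1 hker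
  obtain ⟨x, rfl⟩ := (Module.End.coe_pow f k ▸ hsurj.iterate k) x₀
  refine SetLike.lt_iff_le_and_exists.2 ⟨f.iterateKer.monotone k.le_succ, x, ?_, hx₀ne⟩
  rwa [LinearMap.mem_ker, pow_succ', Module.End.mul_apply]

theorem Module.End.apply_mem_ker_pow_of_mem_ker_pow_succ {R M : Type*} [Semiring R]
    [AddCommMonoid M] [Module R M] {f : Module.End R M} {k : ℕ} {x : M}
    (hx : x ∈ LinearMap.ker (f ^ (k + 1))) : f x ∈ LinearMap.ker (f ^ k) := by
  rwa [LinearMap.mem_ker, ← Module.End.mul_apply, ← pow_succ]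

theorem exists_bounded_seq_one_le_norm_sub_of_strictMono {𝕜 E : Type*}
    [NontriviallyNormedField 𝕜] [NormedAddCommGroup E] [NormedSpace 𝕜 E]
    {N : ℕ → Submodule 𝕜 E} (hN : StrictMono N) (hclosed : ∀ k, IsClosed (N k : Set E)) :
    ∃ R : ℝ, ∃ y : ℕ → E,
      (∀ k, ‖y k‖ ≤ R) ∧ (∀ k, y k ∈ N (k + 1)) ∧ ∀ k, ∀ w ∈ N k, 1 ≤ ‖y k - w‖ := by
  obtain ⟨c, hc⟩ := NormedField.exists_one_lt_norm 𝕜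
  have (k : ℕ) : ∃ y ∈ N (k + 1), ‖y‖ ≤ ‖c‖ + 1 ∧ ∀ w ∈ N k, 1 ≤ ‖y - w‖ := by
    obtain ⟨x, hx, hxk⟩ := SetLike.exists_of_lt (hN k.lt_succ_self)
    obtain ⟨⟨y, hy⟩, hyR, hfar⟩ := riesz_lemma_of_norm_lt hc (lt_add_one _)
      (F := (N k).comap (N (k + 1)).subtype) ((hclosed k).preimage continuous_subtype_val)
      ⟨⟨x, hx⟩, hxk⟩
    exact ⟨y, hy, hyR, fun w hw => hfar ⟨w, hN.monotone k.le_succ hw⟩ hw⟩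
  choose y hy hyR hfar using this
  exact ⟨_, y, hyR, hy, hfar⟩

theorem LinearMap.norm_le_norm_apply_sub_apply_of_mem_ker_pow {𝕜 E : Type*} [NormedField 𝕜]
    [NormedAddCommGroup E] [NormedSpace 𝕜 E] (A : E →ₗ[𝕜] E) {z : 𝕜} (hz : z ≠ 0) {j k : ℕ}
    (hjk : j < k) {u v : E} (hu : u ∈ LinearMap.ker ((A - z • 1) ^ (j + 1)))
    (hv : v ∈ LinearMap.ker ((A - z • 1) ^ (k + 1)))
    (hfar : ∀ w ∈ LinearMap.ker ((A - z • 1) ^ k), 1 ≤ ‖v - w‖) :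
    ‖z‖ ≤ ‖A v - A u‖ := by
  set f := A - z • 1
  have hmono : Monotone fun n => LinearMap.ker (f ^ n) := f.iterateKer.monotone
  have hw : u + z⁻¹ • (f u - f v) ∈ LinearMap.ker (f ^ k) :=
    add_mem (hmono hjk hu) <| Submodule.smul_mem _ _ <| sub_mem
      (hmono hjk.le (Module.End.apply_mem_ker_pow_of_mem_ker_pow_succ hu))
      (Module.End.apply_mem_ker_pow_of_mem_ker_pow_succ hv)
  have hAvu : A v - A u = z • (v - (u + z⁻¹ • (f u - f v))) := by
    simp only [f, LinearMap.sub_apply, LinearMap.smul_apply, Module.End.one_apply, smul_sub,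
      smul_add, smul_inv_smul₀ hz]
    abel
  calc ‖z‖ = ‖z‖ * 1 := (mul_one _).symm
    _ ≤ ‖z‖ * ‖v - (u + z⁻¹ • (f u - f v))‖ := by gcongr; exact hfar _ hw
    _ = ‖A v - A u‖ := by rw [hAvu, norm_smul]

theorem IsCompactOperator.ker_sub_smul_one_eq_bot_of_surjective {𝕜 E : Type*}
    [NontriviallyNormedField 𝕜] [NormedAddCommGroup E] [NormedSpace 𝕜 E] {A : E →L[𝕜] E}
    (hA : IsCompactOperator A) {z : 𝕜} (hz : z ≠ 0)
    (hsurj : Function.Surjective (A - z • 1 : E →L[𝕜] E)) :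
    LinearMap.ker ((A - z • 1 : E →L[𝕜] E) : E →ₗ[𝕜] E) = ⊥ := by
  by_contra hker
  set f : Module.End 𝕜 E := ((A - z • 1 : E →L[𝕜] E) : E →ₗ[𝕜] E) with hf
  have hclosed (k : ℕ) : IsClosed (LinearMap.ker (f ^ k) : Set E) := by
    simpa only [hf, ContinuousLinearMap.toLinearMap_pow] using ((A - z • 1) ^ k).isClosed_ker
  obtain ⟨R, y, hyR, hy, hfar⟩ := exists_bounded_seq_one_le_norm_sub_of_strictMono
    (Module.End.strictMono_ker_pow_of_surjective hsurj hker) hclosed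
  have hsep : Pairwise fun j k => ‖z‖ ≤ dist (A (y j)) (A (y k)) := by
    intro j k hjk
    rcases hjk.lt_or_gt with hjk | hkj
    · rw [dist_comm, dist_eq_norm]
      exact (A : E →ₗ[𝕜] E).norm_le_norm_apply_sub_apply_of_mem_ker_pow hz hjk (hy j) (hy k)
        (hfar k)
    · rw [dist_eq_norm]
      exact (A : E →ₗ[𝕜] E).norm_le_norm_apply_sub_apply_of_mem_ker_pow hz hkj (hy k) (hy j)
        (hfar j)
  obtain ⟨K, hK, hAK⟩ := hA.image_closedBall_subset_compact R
  exact hK.not_pairwise_le_dist (fun n => hAK ⟨y n, by simpa using hyR n, rfl⟩)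
    (norm_pos_iff.2 hz) hsep

theorem stmt19_general (T : H →L[ℂ] H) (hcomp : IsCompactOperator ⇑T) :
    ∀ U K : H →L[ℂ] H, U ∈ unitary (H →L[ℂ] H) → IsCompactOperator ⇑K →
      ¬ ∃ (n : ℕ) (Ω : Set ℂ), 0 < n ∧ InCowenDouglasClass ((U + K) * T) n Ω := by
  rintro U K - - ⟨n, Ω, hn, hopen, hconn, hpoint, -⟩
  obtain ⟨z₀, hz₀⟩ := hconn.nonempty
  obtain ⟨z, hzΩ, hz⟩ :=
    (Set.Infinite.nontrivial (infinite_of_mem_nhds z₀ (hopen.mem_nhds hz₀))).exists_ne 0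
  obtain ⟨hsurj, hrank⟩ := hpoint z hzΩ
  rw [(hcomp.clm_comp (U + K)).ker_sub_smul_one_eq_bot_of_surjective hz hsurj, finrank_bot] at hrank
  omega

theorem stmt19 (T : H →L[ℂ] H) (hcomp : IsCompactOperator ⇑T)
    (hker : LinearMap.ker (T : H →ₗ[ℂ] H) = ⊥) (hrange : DenseRange ⇑T) :
    ∀ U K : H →L[ℂ] H, U ∈ unitary (H →L[ℂ] H) → IsCompactOperator ⇑K →
      ¬ ∃ (n : ℕ) (Ω : Set ℂ), 0 < n ∧ InCowenDouglasClass ((U + K) * T) n Ω :=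
  stmt19_general T hcomp
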